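/- Let A₂, A₃ ∈ ℝ with A₂ ≠ 0 and |A₃| = √2·|A₂|. Then the trace-type octupolar potential Φₜ(x₁,x₂,x₃) = A₂x₁²x₂ + A₃x₂²x₃ has exactly six critical points on the unit sphere S², three in each open hemisphere x₃ > 0 and x₃ < 0. -/

import Mathlib

/-!
Writing out `∇Φₜ(x) = c x` coordinatewise and eliminating the multiplier `c` shows that a
critical point with `x₁ ≠ 0` satisfies `A₂² x₁² = (2A₂² - A₃²) x₂²`; on the curve `A₃² = 2A₂²`
this forces `x₁ = 0`. In the plane `x₁ = 0` the critical points are the poles `(0, 0, ±1)` and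
the four points with `x₂² = 2x₃² = 2/3`. None of them lies on the equator, and `x ↦ -x` swaps
the two hemispheres because `Φₜ` is odd, so each hemisphere holds three of the six points.
-/

/-- The trace-type octupolar potential `Φₜ(x) = A₂x₁²x₂ + A₃x₂²x₃`. -/
noncomputable def tracePot (A₂ A₃ : ℝ) (x : EuclideanSpace ℝ (Fin 3)) : ℝ :=
  A₂ * (x 0) ^ 2 * x 1 + A₃ * (x 1) ^ 2 * x 2

/-- The set of critical points of the trace-type potential on the unit sphere. -/
noncomputable def traceCrit (A₂ A₃ : ℝ) : Set (EuclideanSpace ℝ (Fin 3)) :=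
  {x | (x 0) ^ 2 + (x 1) ^ 2 + (x 2) ^ 2 = 1 ∧
    ∃ c : ℝ, gradient (tracePot A₂ A₃) x = c • x}

lemma EuclideanSpace.eq_vec3_iff {𝕜 : Type*} [RCLike 𝕜] {x : EuclideanSpace 𝕜 (Fin 3)}
    {a b c : 𝕜} : x = !₂[a, b, c] ↔ x 0 = a ∧ x 1 = b ∧ x 2 = c := by
  simp [PiLp.ext_iff, Fin.forall_fin_succ]

lemma hasGradientAt_tracePot (A₂ A₃ : ℝ) (x : EuclideanSpace ℝ (Fin 3)) :
    HasGradientAt (tracePot A₂ A₃)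
      !₂[2 * A₂ * x 0 * x 1, A₂ * x 0 ^ 2 + 2 * A₃ * x 1 * x 2, A₃ * x 1 ^ 2] x := by
  have hproj (i : Fin 3) : HasFDerivAt (fun y : EuclideanSpace ℝ (Fin 3) => y i)
      (EuclideanSpace.proj i : EuclideanSpace ℝ (Fin 3) →L[ℝ] ℝ) x :=
    (EuclideanSpace.proj i : EuclideanSpace ℝ (Fin 3) →L[ℝ] ℝ).hasFDerivAt
  rw [hasGradientAt_iff_hasFDerivAt]
  refine ((((hproj 0).pow 2).const_mul A₂).mul (hproj 1)).add
    ((((hproj 1).pow 2).const_mul A₃).mul (hproj 2)) |>.congr_fderiv ?_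
  ext v
  simp [PiLp.inner_apply, Fin.sum_univ_three]
  ring

lemma mem_traceCrit_iff {A₂ A₃ : ℝ} {x : EuclideanSpace ℝ (Fin 3)} :
    x ∈ traceCrit A₂ A₃ ↔ x 0 ^ 2 + x 1 ^ 2 + x 2 ^ 2 = 1 ∧
      ∃ c : ℝ, 2 * A₂ * x 0 * x 1 = c * x 0 ∧
        A₂ * x 0 ^ 2 + 2 * A₃ * x 1 * x 2 = c * x 1 ∧ A₃ * x 1 ^ 2 = c * x 2 := by
  simp [traceCrit, (hasGradientAt_tracePot A₂ A₃ x).gradient, PiLp.ext_iff, Fin.forall_fin_succ]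

lemma neg_mem_traceCrit {A₂ A₃ : ℝ} {x : EuclideanSpace ℝ (Fin 3)} (hx : x ∈ traceCrit A₂ A₃) :
    -x ∈ traceCrit A₂ A₃ := by
  obtain ⟨hsph, c, h₀, h₁, h₂⟩ := mem_traceCrit_iff.1 hx
  simp only [mem_traceCrit_iff, PiLp.neg_apply]
  exact ⟨by linear_combination hsph, -c, by linear_combination h₀, by linear_combination h₁,
    by linear_combination h₂⟩

lemma neg_mem_traceCrit_iff {A₂ A₃ : ℝ} {x : EuclideanSpace ℝ (Fin 3)} :
    -x ∈ traceCrit A₂ A₃ ↔ x ∈ traceCrit A₂ A₃ :=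
  ⟨fun hx ↦ neg_neg x ▸ neg_mem_traceCrit hx, neg_mem_traceCrit⟩

lemma apply_zero_eq_zero_of_mem_traceCrit {A₂ A₃ : ℝ} (hA₂ : A₂ ≠ 0) (hA : A₃ ^ 2 = 2 * A₂ ^ 2)
    {x : EuclideanSpace ℝ (Fin 3)} (hx : x ∈ traceCrit A₂ A₃) : x 0 = 0 := by
  obtain ⟨-, c, h₀, h₁, h₂⟩ := mem_traceCrit_iff.1 hx
  by_contra hx₀
  have hc : c = 2 * A₂ * x 1 := (mul_right_cancel₀ hx₀ (by linear_combination h₀)).symm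
  have hx₁ : x 1 ≠ 0 := by
    rintro hx₁
    simp_all
  have hx₂ : A₃ * x 1 = 2 * A₂ * x 2 := mul_right_cancel₀ hx₁ (by linear_combination h₂ + x 2 * hc)
  have : A₂ ^ 2 * x 0 ^ 2 = 0 := by
    linear_combination A₂ * h₁ + A₂ * x 1 * hc + A₃ * x 1 * hx₂ - x 1 ^ 2 * hA
  simp_all

lemma mem_traceCrit_iff_of_apply_zero_eq_zero {A₂ A₃ : ℝ} (hA₃ : A₃ ≠ 0)
    {x : EuclideanSpace ℝ (Fin 3)} (hx₀ : x 0 = 0) :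
    x ∈ traceCrit A₂ A₃ ↔ x 1 = 0 ∧ x 2 ^ 2 = 1 ∨ x 1 ^ 2 = 2 / 3 ∧ x 2 ^ 2 = 1 / 3 := by
  simp only [mem_traceCrit_iff, hx₀]
  constructor
  · rintro ⟨hsph, c, -, h₁, h₂⟩
    by_cases hx₁ : x 1 = 0
    · exact .inl ⟨hx₁, by simpa [hx₁] using hsph⟩
    have hc : c = 2 * A₃ * x 2 := (mul_right_cancel₀ hx₁ (by linear_combination h₁)).symm
    have hx₁₂ : x 1 ^ 2 = 2 * x 2 ^ 2 :=
      mul_left_cancel₀ hA₃ (by linear_combination h₂ + x 2 * hc)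
    exact .inr ⟨by linear_combination 2 / 3 * hsph + hx₁₂ / 3,
      by linear_combination hsph / 3 - hx₁₂ / 3⟩
  · rintro (⟨hx₁, hx₂⟩ | ⟨hx₁, hx₂⟩)
    · exact ⟨by simp [hx₁, hx₂], 0, by simp [hx₁]⟩
    · exact ⟨by linear_combination hx₁ + hx₂, 2 * A₃ * x 2, by ring, by ring,
        by linear_combination A₃ * hx₁ - 2 * A₃ * hx₂⟩

lemma traceCrit_inter_upper {A₂ A₃ : ℝ} (hA₂ : A₂ ≠ 0) (hA : A₃ ^ 2 = 2 * A₂ ^ 2) :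
    {x ∈ traceCrit A₂ A₃ | 0 < x 2} =
      {!₂[0, 0, 1], !₂[0, √(2 / 3), √(1 / 3)], !₂[0, -√(2 / 3), √(1 / 3)]} := by
  have hA₃ : A₃ ≠ 0 := by rintro rfl; simp_all
  have hs : √(2 / 3) ^ 2 = 2 / 3 := Real.sq_sqrt (by norm_num)
  have ht : √(1 / 3) ^ 2 = 1 / 3 := Real.sq_sqrt (by norm_num)
  have ht₀ : 0 < √(1 / 3) := by positivity
  ext x
  simp only [Set.mem_ofPred_eq, Set.mem_insert_iff, Set.mem_singleton_iff,
    EuclideanSpace.eq_vec3_iff]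
  constructor
  · rintro ⟨hx, hx₂⟩
    have hx₀ := apply_zero_eq_zero_of_mem_traceCrit hA₂ hA hx
    rcases (mem_traceCrit_iff_of_apply_zero_eq_zero hA₃ hx₀).1 hx with
      ⟨hx₁, hx₂'⟩ | ⟨hx₁, hx₂'⟩
    · exact .inl ⟨hx₀, hx₁,
        (pow_left_inj₀ hx₂.le zero_le_one two_ne_zero).1 (hx₂'.trans (one_pow 2).symm)⟩
    · have hx₂ : x 2 = √(1 / 3) :=
        (pow_left_inj₀ hx₂.le ht₀.le two_ne_zero).1 (hx₂'.trans ht.symm)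
      rcases sq_eq_sq_iff_eq_or_eq_neg.1 (hx₁.trans hs.symm) with hx₁ | hx₁
      exacts [.inr (.inl ⟨hx₀, hx₁, hx₂⟩), .inr (.inr ⟨hx₀, hx₁, hx₂⟩)]
  · rintro (⟨hx₀, hx₁, hx₂⟩ | ⟨hx₀, hx₁, hx₂⟩ | ⟨hx₀, hx₁, hx₂⟩) <;>
      refine ⟨(mem_traceCrit_iff_of_apply_zero_eq_zero hA₃ hx₀).2 ?_, by rw [hx₂]; positivity⟩ <;>
      simp only [hx₁, hx₂, neg_sq, hs, ht, one_pow] <;> norm_num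

lemma apply_two_ne_zero_of_mem_traceCrit {A₂ A₃ : ℝ} (hA₂ : A₂ ≠ 0) (hA : A₃ ^ 2 = 2 * A₂ ^ 2)
    {x : EuclideanSpace ℝ (Fin 3)} (hx : x ∈ traceCrit A₂ A₃) : x 2 ≠ 0 := by
  have hA₃ : A₃ ≠ 0 := by rintro rfl; simp_all
  intro hx₂
  rcases (mem_traceCrit_iff_of_apply_zero_eq_zero hA₃
    (apply_zero_eq_zero_of_mem_traceCrit hA₂ hA hx)).1 hx with ⟨-, h⟩ | ⟨-, h⟩ <;>
    norm_num [hx₂] at h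

lemma encard_traceCrit_inter_upper {A₂ A₃ : ℝ} (hA₂ : A₂ ≠ 0) (hA : A₃ ^ 2 = 2 * A₂ ^ 2) :
    {x ∈ traceCrit A₂ A₃ | 0 < x 2}.encard = 3 := by
  have hs : 0 < √(2 / 3) := by positivity
  rw [traceCrit_inter_upper hA₂ hA, Set.encard_eq_three]
  refine ⟨_, _, _, ?_, ?_, ?_, rfl⟩ <;> rw [Ne, EuclideanSpace.eq_vec3_iff] <;>
    rintro ⟨-, h, -⟩ <;> simp only [Matrix.cons_val] at h <;> linarith

lemma traceCrit_inter_lower {A₂ A₃ : ℝ} :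
    {x ∈ traceCrit A₂ A₃ | x 2 < 0} = -{x ∈ traceCrit A₂ A₃ | 0 < x 2} := by
  ext x
  simp [neg_mem_traceCrit_iff]

lemma traceCrit_eq_upper_union_lower {A₂ A₃ : ℝ} (hA₂ : A₂ ≠ 0) (hA : A₃ ^ 2 = 2 * A₂ ^ 2) :
    traceCrit A₂ A₃ = {x ∈ traceCrit A₂ A₃ | 0 < x 2} ∪ {x ∈ traceCrit A₂ A₃ | x 2 < 0} := by
  ext x
  simp only [Set.mem_union, Set.mem_ofPred_eq, ← and_or_left, iff_self_and]
  exact fun hx ↦ (apply_two_ne_zero_of_mem_traceCrit hA₂ hA hx).gt_or_lt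

theorem stmt16 (A₂ A₃ : ℝ) (hA₂ : A₂ ≠ 0) (h : |A₃| = Real.sqrt 2 * |A₂|) :
    (traceCrit A₂ A₃).encard = 6 ∧
    {x ∈ traceCrit A₂ A₃ | 0 < x 2}.encard = 3 ∧
    {x ∈ traceCrit A₂ A₃ | x 2 < 0}.encard = 3 := by
  have hA : A₃ ^ 2 = 2 * A₂ ^ 2 := by
    rw [← sq_abs, h, mul_pow, Real.sq_sqrt zero_le_two, sq_abs]
  have hupper := encard_traceCrit_inter_upper hA₂ hA
  have hlower : {x ∈ traceCrit A₂ A₃ | x 2 < 0}.encard = 3 := by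
    rw [traceCrit_inter_lower, Set.encard_neg, hupper]
  have hdisj : Disjoint {x ∈ traceCrit A₂ A₃ | 0 < x 2} {x ∈ traceCrit A₂ A₃ | x 2 < 0} :=
    Set.disjoint_left.2 fun x hpos hneg ↦ hpos.2.not_gt hneg.2
  refine ⟨?_, hupper, hlower⟩
  rw [traceCrit_eq_upper_union_lower hA₂ hA, Set.encard_union_eq hdisj, hupper, hlower]
  rfl
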